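/- Let M, N ∈ rep(C_r) (r ≥ 3) be indecomposable, let x ∈ C_r^+ be a leaf of M and y ∈ C_r^- a leaf of N. Then there exists g ∈ G such that (N^g, M) is leaf-connected with connecting arrow x → g.y. -/

import Mathlib

open DirectSum

/-!
# Shared framework

Concrete finite-dimensional representations of the generalized Kronecker quiver `Γ_r`
(`KRep`) and of its universal covering quiver `C_r` (an `r`-regular tree with bipartite
orientation, `CrQuiver`/`CrRep`), together with an abstract layer
(`KroneckerAR`, `CoverAR`) for the Auslander–Reiten-theoretic notions
(AR translate, components, quasi-simplicity, quasi-length, preprojective/preinjective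
representations) that are not available in Mathlib.
-/

/-! ## Representations of the generalized Kronecker quiver `Γ_r` -/

/-- A finite-dimensional representation of the `r`-Kronecker quiver `Γ_r`
(two vertices `1, 2` and `r` arrows `γ_1, …, γ_r : 1 → 2`) over `k`. -/
structure KRep (k : Type) [Field k] (r : ℕ) where
  V1 : Type
  V2 : Type
  [a1 : AddCommGroup V1]
  [a2 : AddCommGroup V2]
  [m1 : Module k V1]
  [m2 : Module k V2]
  [f1 : FiniteDimensional k V1]
  [f2 : FiniteDimensional k V2]
  map : Fin r → V1 →ₗ[k] V2

attribute [instance] KRep.a1 KRep.a2 KRep.m1 KRep.m2 KRep.f1 KRep.f2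

namespace KRep

variable {k : Type} [Field k] {r : ℕ}

/-- Morphisms of representations of `Γ_r`. -/
structure Hom (M N : KRep k r) where
  f1 : M.V1 →ₗ[k] N.V1
  f2 : M.V2 →ₗ[k] N.V2
  comm : ∀ i, (N.map i).comp f1 = f2.comp (M.map i)

/-- Isomorphisms of representations of `Γ_r`. -/
structure Iso (M N : KRep k r) where
  e1 : M.V1 ≃ₗ[k] N.V1
  e2 : M.V2 ≃ₗ[k] N.V2
  comm : ∀ i, (N.map i).comp (e1 : M.V1 →ₗ[k] N.V1) = (e2 : M.V2 →ₗ[k] N.V2).comp (M.map i)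

/-- `M` is indecomposable: it is nonzero and its endomorphism ring has no nontrivial
idempotents. -/
def Indec (M : KRep k r) : Prop :=
  ((∃ v : M.V1, v ≠ 0) ∨ (∃ v : M.V2, v ≠ 0)) ∧
  ∀ f : Hom M M, f.f1.comp f.f1 = f.f1 → f.f2.comp f.f2 = f.f2 →
    (f.f1 = 0 ∧ f.f2 = 0) ∨ (f.f1 = LinearMap.id ∧ f.f2 = LinearMap.id)

/-- `rad(M, N) ≠ 0`: there is a nonzero non-invertible homomorphism `M → N`. -/
def radNe (M N : KRep k r) : Prop :=
  ∃ f : Hom M N, (f.f1 ≠ 0 ∨ f.f2 ≠ 0) ∧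
    ¬ (Function.Bijective f.f1 ∧ Function.Bijective f.f2)

/-- The equal kernels property: `M^α = Σ α_i M(γ_i)` is injective for all `α ≠ 0`. -/
def EKP (M : KRep k r) : Prop :=
  ∀ α : Fin r → k, α ≠ 0 → Function.Injective ⇑(∑ i, α i • M.map i)

/-- The equal images property: `M^α = Σ α_i M(γ_i)` is surjective for all `α ≠ 0`. -/
def EIP (M : KRep k r) : Prop :=
  ∀ α : Fin r → k, α ≠ 0 → Function.Surjective ⇑(∑ i, α i • M.map i)

/-- The dimension vector `(dim_k M_1, dim_k M_2)`. -/
noncomputable def dimVec (M : KRep k r) : ℕ × ℕ := (Module.finrank k M.V1, Module.finrank k M.V2)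

/-- The standard duality `D` on `rep(Γ_r)`:
`(DM)_1 = (M_2)^*`, `(DM)_2 = (M_1)^*`, `(DM)(γ_i) = M(γ_i)^*`. -/
noncomputable def dual (M : KRep k r) : KRep k r where
  V1 := Module.Dual k M.V2
  V2 := Module.Dual k M.V1
  map i := (M.map i).dualMap

/-- The action of an `r × r`-matrix `A` on a representation, corresponding to the pullback
along the algebra homomorphism `φ_A` with `φ_A(γ_j) = Σ_i a_{ij} γ_i`. -/
def glAct (M : KRep k r) (A : Matrix (Fin r) (Fin r) k) : KRep k r where
  V1 := M.V1
  V2 := M.V2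
  map j := ∑ i, A i j • M.map i

/-- `M` is `GL_r(k)`-stable: `A.M ≅ M` for every `A ∈ GL_r(k)`, where `A.M` is the pullback
of `M` along `φ_{A⁻¹}`. -/
def GLStable (M : KRep k r) : Prop :=
  ∀ A : GL (Fin r) k,
    Nonempty (Iso (M.glAct ((A⁻¹ : GL (Fin r) k) : Matrix (Fin r) (Fin r) k)) M)

end KRep

/-! ## Abstract Auslander–Reiten data for `rep(Γ_r)` -/

/-- Abstract Auslander–Reiten-theoretic data for the generalized Kronecker algebra
`K_r = kΓ_r`: the AR translate `τ` (a bijection on regular indecomposables, here recorded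
as a permutation of all representations), the classes of preprojective and preinjective
representations, the relation of lying in the same AR component, and quasi-simplicity. -/
structure KroneckerAR (k : Type) [Field k] (r : ℕ) where
  /-- The Auslander–Reiten translate `τ`. -/
  tau : Equiv.Perm (KRep k r)
  /-- `M` lies in the preprojective component `𝒫`. -/
  Preproj : KRep k r → Prop
  /-- `M` lies in one of the preinjective component `ℐ`. -/
  Preinj : KRep k r → Prop
  /-- `M`, `N` lie in the same component of the AR quiver. -/
  sameComp : KRep k r → KRep k r → Prop
  sameComp_equiv : Equivalence sameComp
  sameComp_tau : ∀ M, sameComp M (tau M)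
  /-- `M` is quasi-simple (lies in the bottom layer of a `ℤA∞` component). -/
  quasiSimple : KRep k r → Prop

namespace KroneckerAR

variable {k : Type} [Field k] {r : ℕ}

/-- `M` is regular: neither preprojective nor preinjective. -/
def Regular (S : KroneckerAR k r) (M : KRep k r) : Prop := ¬ S.Preproj M ∧ ¬ S.Preinj M

/-- The regular component containing `X` has width `W(𝒞) = w`: there are quasi-simple
representations `M_𝒞` and `W_𝒞` in the component of `X` such that the `τ⁻¹`-orbit of `M_𝒞`
consists of `EKP`-representations, `τ M_𝒞 ∉ EKP` (so the cone `(M_𝒞 →)` is `EKP ∩ 𝒞`),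
dually the `τ`-orbit of `W_𝒞` consists of `EIP`-representations with `τ⁻¹ W_𝒞 ∉ EIP`
(so `(→ W_𝒞) = EIP ∩ 𝒞`), and `τ^{w+1} M_𝒞 = W_𝒞`. -/
def IsWidth (S : KroneckerAR k r) (X : KRep k r) (w : ℕ) : Prop :=
  ∃ MC WC : KRep k r, S.quasiSimple MC ∧ S.quasiSimple WC ∧
    S.sameComp X MC ∧ S.sameComp X WC ∧
    (∀ j : ℕ, ((S.tau⁻¹ ^ j) MC).EKP) ∧ ¬ (S.tau MC).EKP ∧
    (∀ j : ℕ, ((S.tau ^ j) WC).EIP) ∧ ¬ (S.tau⁻¹ WC).EIP ∧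
    (S.tau ^ (w + 1)) MC = WC

end KroneckerAR
/-! ## The universal covering quiver `C_r` -/

/-- The combinatorial data of a quiver whose underlying graph is `r`-regular and which has
bipartite orientation: a set `Src` of sources, a set `Snk` of sinks, and for each source
(resp. sink) exactly one incident arrow with label (`π`-image) `γ_i` for every `i`;
`step x i` is the target of the arrow labelled `i` starting at `x`, and `back y i` is the
source of the arrow labelled `i` ending at `y`. -/
structure BipData (r : ℕ) where
  Src : Type
  Snk : Type
  step : Src → Fin r → Snk
  back : Snk → Fin r → Src
  step_back : ∀ y i, step (back y i) i = y
  back_step : ∀ x i, back (step x i) i = x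
  step_inj : ∀ x, Function.Injective (step x)
  back_inj : ∀ y, Function.Injective (back y)

/-- The underlying (simple) graph of the quiver. -/
def BipData.graph {r : ℕ} (Q : BipData r) : SimpleGraph (Q.Src ⊕ Q.Snk) where
  Adj a b := (∃ x i, a = Sum.inl x ∧ b = Sum.inr (Q.step x i)) ∨
             (∃ x i, b = Sum.inl x ∧ a = Sum.inr (Q.step x i))
  symm := ⟨by
    rintro a b (⟨x, i, h1, h2⟩ | ⟨x, i, h1, h2⟩)
    · exact Or.inr ⟨x, i, h1, h2⟩
    · exact Or.inl ⟨x, i, h1, h2⟩⟩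
  loopless := ⟨by
    rintro a (⟨x, i, h1, h2⟩ | ⟨x, i, h1, h2⟩) <;> (subst h1; simp at h2)⟩

/-- The universal covering quiver `C_r` of `Γ_r`: an `r`-regular tree with bipartite
orientation. -/
structure CrQuiver (r : ℕ) extends BipData r where
  isTree : toBipData.graph.IsTree

/-! ## Representations of `C_r` -/

/-- A finite-dimensional representation of `C_r` over `k` (finitely supported). -/
structure CrRep (k : Type) [Field k] {r : ℕ} (Q : CrQuiver r) where
  Vs : Q.Src → Type
  Vt : Q.Snk → Type
  [acs : ∀ x, AddCommGroup (Vs x)]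
  [mds : ∀ x, Module k (Vs x)]
  [act : ∀ y, AddCommGroup (Vt y)]
  [mdt : ∀ y, Module k (Vt y)]
  [fds : ∀ x, FiniteDimensional k (Vs x)]
  [fdt : ∀ y, FiniteDimensional k (Vt y)]
  map : ∀ (x : Q.Src) (i : Fin r), Vs x →ₗ[k] Vt (Q.step x i)
  finSupp : {z : Q.Src ⊕ Q.Snk |
      Sum.elim (fun x => ∃ v : Vs x, v ≠ 0) (fun y => ∃ v : Vt y, v ≠ 0) z}.Finite

attribute [instance] CrRep.acs CrRep.mds CrRep.act CrRep.mdt CrRep.fds CrRep.fdt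

namespace CrRep

variable {k : Type} [Field k] {r : ℕ} {Q : CrQuiver r}

/-- The support of `M`. -/
def suppSet (M : CrRep k Q) : Set (Q.Src ⊕ Q.Snk) :=
  {z | Sum.elim (fun x => ∃ v : M.Vs x, v ≠ 0) (fun y => ∃ v : M.Vt y, v ≠ 0) z}

/-- `z` belongs to `T(M)`, the minimal subtree of `C_r` containing the support of `M`:
it lies on a path between two support vertices. -/
def inTree (M : CrRep k Q) (z : Q.Src ⊕ Q.Snk) : Prop :=
  ∃ a ∈ M.suppSet, ∃ b ∈ M.suppSet, ∃ p : Q.toBipData.graph.Walk a b,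
    p.IsPath ∧ z ∈ p.support

/-- `z` is a leaf of `M`: a vertex of `T(M)` with at most one neighbour in `T(M)`. -/
def IsLeaf (M : CrRep k Q) (z : Q.Src ⊕ Q.Snk) : Prop :=
  M.inTree z ∧ {w | Q.toBipData.graph.Adj z w ∧ M.inTree w}.Subsingleton

/-- The dimension of `M` at a vertex. -/
noncomputable def dimAt (M : CrRep k Q) (z : Q.Src ⊕ Q.Snk) : ℕ :=
  Sum.elim (fun x => Module.finrank k (M.Vs x)) (fun y => Module.finrank k (M.Vt y)) z

/-- All structure maps of `M` are injective (the class `Inj`). -/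
def AllInj (M : CrRep k Q) : Prop := ∀ x i, Function.Injective ⇑(M.map x i)

/-- All structure maps of `M` are surjective (the class `Sur`). -/
def AllSur (M : CrRep k Q) : Prop := ∀ x i, Function.Surjective ⇑(M.map x i)

end CrRep

/-- Morphisms of representations of `C_r`. -/
structure CrHom {k : Type} [Field k] {r : ℕ} {Q : CrQuiver r} (M N : CrRep k Q) where
  fs : ∀ x, M.Vs x →ₗ[k] N.Vs x
  ft : ∀ y, M.Vt y →ₗ[k] N.Vt y
  comm : ∀ x i, (ft (Q.step x i)).comp (M.map x i) = (N.map x i).comp (fs x)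

/-- A morphism is zero if all its components vanish. -/
def CrHom.IsZero {k : Type} [Field k] {r : ℕ} {Q : CrQuiver r} {M N : CrRep k Q}
    (f : CrHom M N) : Prop :=
  (∀ x, f.fs x = 0) ∧ (∀ y, f.ft y = 0)

/-- Isomorphisms of representations of `C_r`. -/
structure CrIso {k : Type} [Field k] {r : ℕ} {Q : CrQuiver r} (M N : CrRep k Q) where
  es : ∀ x, M.Vs x ≃ₗ[k] N.Vs x
  et : ∀ y, M.Vt y ≃ₗ[k] N.Vt y
  comm : ∀ x i, ((et (Q.step x i) : M.Vt (Q.step x i) →ₗ[k] N.Vt (Q.step x i))).comp (M.map x i)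
      = (N.map x i).comp (es x : M.Vs x →ₗ[k] N.Vs x)

namespace CrRep

variable {k : Type} [Field k] {r : ℕ} {Q : CrQuiver r}

/-- `M` is indecomposable: it is nonzero and its endomorphism ring has no nontrivial
idempotents. -/
def Indec (M : CrRep k Q) : Prop :=
  M.suppSet.Nonempty ∧
  ∀ f : CrHom M M, (∀ x, (f.fs x).comp (f.fs x) = f.fs x) →
    (∀ y, (f.ft y).comp (f.ft y) = f.ft y) →
    f.IsZero ∨ ((∀ x, f.fs x = LinearMap.id) ∧ (∀ y, f.ft y = LinearMap.id))

/-- `M` is balanced: indecomposable with a leaf in `C_r^+` (sources) and a leaf in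
`C_r^-` (sinks). -/
def Balanced (M : CrRep k Q) : Prop :=
  M.Indec ∧ (∃ x : Q.Src, M.IsLeaf (Sum.inl x)) ∧ (∃ y : Q.Snk, M.IsLeaf (Sum.inr y))

end CrRep
/-! ## The push-down functor `π_λ : rep(C_r) → rep(Γ_r)` -/

theorem finiteDimensional_directSum {k : Type} [Field k] {ι : Type} (V : ι → Type)
    [∀ i, AddCommGroup (V i)] [∀ i, Module k (V i)] [∀ i, FiniteDimensional k (V i)]
    (h : {i : ι | ∃ v : V i, v ≠ 0}.Finite) : FiniteDimensional k (⨁ i, V i) := by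
  classical
  set s : Finset ι := h.toFinset with hs
  let g : (⨁ i : {j // j ∈ s}, V i.1) →ₗ[k] ⨁ i, V i :=
    DirectSum.toModule k {j // j ∈ s} (⨁ i, V i) fun i => DirectSum.lof k ι V i.1
  have hfd : FiniteDimensional k (⨁ i : {j // j ∈ s}, V i.1) := by
    have e := DirectSum.linearEquivFunOnFintype k {j // j ∈ s} (fun i : {j // j ∈ s} => V i.1)
    exact Module.Finite.equiv e.symm
  have hsurj : Function.Surjective g := by
    intro m
    induction m using DirectSum.induction_on with
    | zero => exact ⟨0, map_zero g⟩
    | of i x =>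
      by_cases hi : i ∈ s
      · refine ⟨DirectSum.lof k {j // j ∈ s} (fun j : {j // j ∈ s} => V j.1) ⟨i, hi⟩ x, ?_⟩
        simp only [g, DirectSum.toModule_lof]
        rw [DirectSum.lof_eq_of]
      · have hx : x = 0 := by
          by_contra hx
          exact hi (by simpa [hs] using ⟨x, hx⟩)
        exact ⟨0, by simp [hx]⟩
    | add a b ha hb =>
      obtain ⟨a', ha'⟩ := ha
      obtain ⟨b', hb'⟩ := hb
      exact ⟨a' + b', by simp [ha', hb']⟩
  exact Module.Finite.of_surjective g hsurj

namespace CrRep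

variable {k : Type} [Field k] {r : ℕ} {Q : CrQuiver r}

/-- The structure map `π_λ(M)(γ_i) = ⊕_{π(β) = γ_i} M(β)` of the push-down. -/
noncomputable def pushMap (M : CrRep k Q) (i : Fin r) :
    (⨁ x, M.Vs x) →ₗ[k] (⨁ y, M.Vt y) := by
  classical
  exact DirectSum.toModule k Q.Src (⨁ y, M.Vt y) fun x =>
    (DirectSum.lof k Q.Snk (fun y => M.Vt y) (Q.step x i)).comp (M.map x i)

/-- The push-down `π_λ(M)` of a representation of `C_r` along the Galois covering
`π : C_r → Γ_r`. -/
noncomputable def pushdown (M : CrRep k Q) : KRep k r where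
  V1 := ⨁ x, M.Vs x
  V2 := ⨁ y, M.Vt y
  f1 := finiteDimensional_directSum (fun x => M.Vs x)
    (M.finSupp.preimage (Set.injOn_of_injective Sum.inl_injective))
  f2 := finiteDimensional_directSum (fun y => M.Vt y)
    (M.finSupp.preimage (Set.injOn_of_injective Sum.inr_injective))
  map := M.pushMap

end CrRep
/-! ## Automorphisms of `C_r` and the actions of `G = π(Γ_r)` and of `S_r` -/

/-- A quiver automorphism of `C_r` lying over the permutation `σ` of the arrow labels
`γ_1, …, γ_r` of `Γ_r`.  For `σ = 1` these are exactly the deck transformations, i.e.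
the elements of the Galois group `G = π(Γ_r)`. -/
structure CrPermAut {r : ℕ} (Q : CrQuiver r) (σ : Equiv.Perm (Fin r)) where
  es : Q.Src ≃ Q.Src
  et : Q.Snk ≃ Q.Snk
  comm : ∀ x i, Q.step (es x) (σ i) = et (Q.step x i)

/-- An element of the Galois group `G = π(Γ_r)`, acting on `C_r` as a label-preserving
quiver automorphism. -/
abbrev CrAut {r : ℕ} (Q : CrQuiver r) := CrPermAut Q (1 : Equiv.Perm (Fin r))

/-- The induced permutation of the vertex set. -/
def CrPermAut.onV {r : ℕ} {Q : CrQuiver r} {σ : Equiv.Perm (Fin r)} (φ : CrPermAut Q σ) :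
    (Q.Src ⊕ Q.Snk) ≃ (Q.Src ⊕ Q.Snk) :=
  Equiv.sumCongr φ.es φ.et

namespace CrRep

variable {k : Type} [Field k] {r : ℕ} {Q : CrQuiver r}

/-- The twist `σ(M)^g` of a representation by an automorphism `φ` of `C_r` lying over
`σ`:  `(M^φ)_x = M_{φ(x)}` and `(M^φ)(α) = M(φ(α))`.  For `σ = 1` this is the shift
`M ↦ M^g` by an element `g` of the Galois group `G`. -/
noncomputable def twist (M : CrRep k Q) {σ : Equiv.Perm (Fin r)} (φ : CrPermAut Q σ) :
    CrRep k Q where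
  Vs x := M.Vs (φ.es x)
  Vt y := M.Vt (φ.et y)
  acs := fun x => inferInstance
  mds := fun x => inferInstance
  act := fun y => inferInstance
  mdt := fun y => inferInstance
  fds := fun x => inferInstance
  fdt := fun y => inferInstance
  map x i := by
    show M.Vs (φ.es x) →ₗ[k] M.Vt (φ.et (Q.step x i))
    rw [← φ.comm x i]
    exact M.map (φ.es x) (σ i)
  finSupp := by
    have h := M.finSupp.preimage (Set.injOn_of_injective φ.onV.injective)
    convert h using 1
    ext z
    cases z <;> rfl

/-- The shift `M ↦ M^g` of a representation by an element of the Galois group. -/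
noncomputable def shift (M : CrRep k Q) (g : CrAut Q) : CrRep k Q := M.twist g

end CrRep
/-! ## Leaf-connected pairs and the extension `N ∗_f M` -/

/-- `(N, M)` is leaf-connected with connecting arrow `α : x0 → Q.step x0 i0`:
`x0` is a leaf of `M`, the target of `α` is a leaf of `N` and the supports are disjoint. -/
def LeafConnected {k : Type} [Field k] {r : ℕ} {Q : CrQuiver r} (N M : CrRep k Q)
    (x0 : Q.Src) (i0 : Fin r) : Prop :=
  M.IsLeaf (Sum.inl x0) ∧ N.IsLeaf (Sum.inr (Q.step x0 i0)) ∧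
  M.suppSet ∩ N.suppSet = ∅

namespace CrRep

variable {k : Type} [Field k] {r : ℕ} {Q : CrQuiver r}

/-- The auxiliary "correction" map used to define `N ∗_f M`: it equals
`(m, n) ↦ (0, f m)` along the connecting arrow and `0` along every other arrow. -/
noncomputable def starCorr (N M : CrRep k Q) (x0 : Q.Src) (i0 : Fin r)
    (f : M.Vs x0 →ₗ[k] N.Vt (Q.step x0 i0)) (x : Q.Src) (i : Fin r) :
    (M.Vs x × N.Vs x) →ₗ[k] (M.Vt (Q.step x i) × N.Vt (Q.step x i)) := by
  classical
  by_cases h : x = x0 ∧ i = i0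
  · obtain ⟨h1, h2⟩ := h
    subst h1; subst h2
    exact (LinearMap.inr k (M.Vt (Q.step x i)) (N.Vt (Q.step x i))).comp
      (f.comp (LinearMap.fst k (M.Vs x) (N.Vs x)))
  · exact 0

/-- The extension `N ∗_f M` of `M` by `N` along a connecting map `f`:
it restricts to `M` on `supp M`, to `N` on `supp N`, and has the map `f` along the
connecting arrow. -/
noncomputable def star (N M : CrRep k Q) (x0 : Q.Src) (i0 : Fin r)
    (f : M.Vs x0 →ₗ[k] N.Vt (Q.step x0 i0)) : CrRep k Q where
  Vs x := M.Vs x × N.Vs x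
  Vt y := M.Vt y × N.Vt y
  acs := fun x => inferInstance
  mds := fun x => inferInstance
  act := fun y => inferInstance
  mdt := fun y => inferInstance
  fds := fun x => inferInstance
  fdt := fun y => inferInstance
  map x i := (M.map x i).prodMap (N.map x i) + starCorr N M x0 i0 f x i
  finSupp := by
    refine (M.finSupp.union N.finSupp).subset ?_
    rintro (x | y) hz
    · obtain ⟨v, hv⟩ := hz
      by_cases h1 : v.1 = 0
      · have h2 : v.2 ≠ 0 := fun h2 => hv (Prod.ext h1 h2)
        exact Or.inr ⟨v.2, h2⟩
      · exact Or.inl ⟨v.1, h1⟩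
    · obtain ⟨v, hv⟩ := hz
      by_cases h1 : v.1 = 0
      · have h2 : v.2 ≠ 0 := fun h2 => hv (Prod.ext h1 h2)
        exact Or.inr ⟨v.2, h2⟩
      · exact Or.inl ⟨v.1, h1⟩

end CrRep

/-! ## Small trees, and the representations `X^i` -/

namespace CrRep

variable {k : Type} [Field k] {r : ℕ} {Q : CrQuiver r}

/-- The tree `T(L)` of `L` is small: it has leaves among the sources and among the sinks,
every vertex has at most `3` neighbours in the tree, and two distinct vertices with
exactly `3` neighbours in the tree have distance at least `3`. -/
def SmallTree (L : CrRep k Q) : Prop :=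
  (∃ x : Q.Src, L.IsLeaf (Sum.inl x)) ∧ (∃ y : Q.Snk, L.IsLeaf (Sum.inr y)) ∧
  (∀ z, L.inTree z → {w | Q.toBipData.graph.Adj z w ∧ L.inTree w}.ncard ≤ 3) ∧
  (∀ z w, L.inTree z → L.inTree w →
    {u | Q.toBipData.graph.Adj z u ∧ L.inTree u}.ncard = 3 →
    {u | Q.toBipData.graph.Adj w u ∧ L.inTree u}.ncard = 3 →
    z = w ∨ 3 ≤ Q.toBipData.graph.dist z w)

/-- `X` is (isomorphic to) the representation `X^i` based at the source `x0`: it is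
indecomposable, one-dimensional at `x0` and at the vertices `t(β_j)`, `j ≠ i`,
zero elsewhere, with isomorphisms along all arrows `β_j`, `j ≠ i`. -/
def IsXi (x0 : Q.Src) (i : Fin r) (X : CrRep k Q) : Prop :=
  X.Indec ∧
  (∀ x : Q.Src, (∃ v : X.Vs x, v ≠ 0) ↔ x = x0) ∧
  (∀ y : Q.Snk, (∃ v : X.Vt y, v ≠ 0) ↔ ∃ j : Fin r, j ≠ i ∧ y = Q.step x0 j) ∧
  Module.finrank k (X.Vs x0) = 1 ∧
  (∀ j : Fin r, j ≠ i → Function.Bijective ⇑(X.map x0 j))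

/-- `M` is `S_r`-stable with respect to the choice `Φ` of automorphisms of `C_r` lying
over the permutations `σ ∈ S_r` of the arrows of `Γ_r`: `M ≅ σ(M)^{g_σ}` for all `σ`. -/
def SrStable (M : CrRep k Q) (Φ : ∀ σ : Equiv.Perm (Fin r), CrPermAut Q σ) : Prop :=
  ∀ σ : Equiv.Perm (Fin r), Nonempty (CrIso M (M.twist (Φ σ)))

end CrRep

/-! ## Abstract Auslander–Reiten data for `rep(C_r)` and `rep(Γ_r)` -/

/-- Abstract Auslander–Reiten-theoretic data for the representations of the universal
covering quiver `C_r` and of `Γ_r`: the AR translates, AR components, quasi-simplicity,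
quasi-length, the preprojective/preinjective classes downstairs, cones in a component,
almost split sequences and injectivity of representations of `C_r`. -/
structure CoverAR (k : Type) [Field k] {r : ℕ} (Q : CrQuiver r) where
  /-- The AR translate `τ_{C_r}` of `rep(C_r)`. -/
  tauC : Equiv.Perm (CrRep k Q)
  /-- The AR translate `τ` of `rep(Γ_r)`. -/
  tauK : Equiv.Perm (KRep k r)
  /-- Same AR component in `rep(C_r)`. -/
  sameC : CrRep k Q → CrRep k Q → Prop
  sameC_equiv : Equivalence sameC
  sameC_tau : ∀ M, sameC M (tauC M)
  /-- Same AR component in `rep(Γ_r)`. -/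
  sameK : KRep k r → KRep k r → Prop
  sameK_equiv : Equivalence sameK
  sameK_tau : ∀ M, sameK M (tauK M)
  /-- Quasi-simple in `rep(C_r)`. -/
  qsC : CrRep k Q → Prop
  /-- Quasi-simple in `rep(Γ_r)`. -/
  qsK : KRep k r → Prop
  /-- Quasi-length in `rep(C_r)`. -/
  qlC : CrRep k Q → ℕ
  /-- Preprojective representations of `Γ_r` (the component `𝒫`). -/
  Preproj : KRep k r → Prop
  /-- Preinjective representations of `Γ_r` (the component `ℐ`). -/
  Preinj : KRep k r → Prop
  /-- The cone `(X →)` of successors of `X` in its AR component. -/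
  succConeC : CrRep k Q → Set (CrRep k Q)
  /-- The cone `(→ X)` of predecessors of `X` in its AR component. -/
  predConeC : CrRep k Q → Set (CrRep k Q)
  /-- `ARSeqTriple A B C` : there is an almost split sequence `0 → A → B → C → 0`. -/
  ARSeqTriple : CrRep k Q → CrRep k Q → CrRep k Q → Prop
  /-- `M` is an injective representation of `C_r`. -/
  InjRep : CrRep k Q → Prop

namespace CoverAR

variable {k : Type} [Field k] {r : ℕ} {Q : CrQuiver r}

/-- `M ∈ rep(C_r)` is regular: its push-down `π_λ(M)` is neither preprojective nor
preinjective. -/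
def RegularC (A : CoverAR k Q) (M : CrRep k Q) : Prop :=
  ¬ A.Preproj M.pushdown ∧ ¬ A.Preinj M.pushdown

/-- `N ∈ rep(Γ_r)` is regular. -/
def RegularK (A : CoverAR k Q) (N : KRep k r) : Prop :=
  ¬ A.Preproj N ∧ ¬ A.Preinj N

/-- The regular component `𝒟` of `rep(C_r)` containing `X` has width `W_C(𝒟) = w`:
there are quasi-simple `I_𝒟`, `S_𝒟` in the component of `X` with
`(I_𝒟 →) = Inj ∩ 𝒟` (equivalently: the whole `τ⁻¹`-orbit of `I_𝒟` lies in `Inj`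
while `τ I_𝒟 ∉ Inj`), dually `(→ S_𝒟) = Sur ∩ 𝒟`, and `τ^{w+1} I_𝒟 = S_𝒟`. -/
def IsWidth (A : CoverAR k Q) (X : CrRep k Q) (w : ℕ) : Prop :=
  ∃ I S : CrRep k Q, A.qsC I ∧ A.qsC S ∧ A.sameC X I ∧ A.sameC X S ∧
    (∀ j : ℕ, ((A.tauC⁻¹ ^ j) I).AllInj) ∧ ¬ (A.tauC I).AllInj ∧
    (∀ j : ℕ, ((A.tauC ^ j) S).AllSur) ∧ ¬ (A.tauC⁻¹ S).AllSur ∧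
    (A.tauC ^ (w + 1)) I = S

/-- The regular component of `X ∈ rep(Γ_r)` has width `W(𝒞) = w`
(formulated as in `KroneckerAR.IsWidth`). -/
def IsWidthK (A : CoverAR k Q) (X : KRep k r) (w : ℕ) : Prop :=
  ∃ MC WC : KRep k r, A.qsK MC ∧ A.qsK WC ∧
    A.sameK X MC ∧ A.sameK X WC ∧
    (∀ j : ℕ, ((A.tauK⁻¹ ^ j) MC).EKP) ∧ ¬ (A.tauK MC).EKP ∧
    (∀ j : ℕ, ((A.tauK ^ j) WC).EIP) ∧ ¬ (A.tauK⁻¹ WC).EIP ∧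
    (A.tauK ^ (w + 1)) MC = WC

end CoverAR


/-!
A leaf has at most one neighbour in its tree, so, as `r ≥ 3`, some label `i0` is such that
the neighbour `x' = t(α)` of `x` along the arrow `α` labelled `i0` is not in `T(M)` and the
neighbour of `y` along the arrow labelled `i0` is not in `T(N)`. Transporting arrow labels
along the unique paths of the tree gives a deck transformation `g` sending `x` to the latter
vertex, hence `x'` to `y`. Subtrees `T(-)` are convex, so `T(M)` lies on the side of the edge
`α` containing `x` and `T(N^g)` on the side containing `x'`; in particular the supports are
disjoint.
-/

namespace BipData

variable {r : ℕ} (Q : BipData r)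

def move (i : Fin r) : Q.Src ⊕ Q.Snk → Q.Src ⊕ Q.Snk
  | .inl x => .inr (Q.step x i)
  | .inr y => .inl (Q.back y i)

variable {Q}

@[simp] lemma move_inl (i : Fin r) (x : Q.Src) : Q.move i (.inl x) = .inr (Q.step x i) := rfl

@[simp] lemma move_inr (i : Fin r) (y : Q.Snk) : Q.move i (.inr y) = .inl (Q.back y i) := rfl

@[simp] lemma move_move (i : Fin r) (v : Q.Src ⊕ Q.Snk) : Q.move i (Q.move i v) = v := by
  cases v <;> simp [Q.back_step, Q.step_back]

lemma isLeft_move (i : Fin r) (v : Q.Src ⊕ Q.Snk) : (Q.move i v).isLeft = !v.isLeft := by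
  cases v <;> rfl

lemma move_left_injective (v : Q.Src ⊕ Q.Snk) : Function.Injective fun i => Q.move i v := by
  intro i j h
  cases v with
  | inl x => exact Q.step_inj x (Sum.inr_injective h)
  | inr y => exact Q.back_inj y (Sum.inl_injective h)

lemma graph_adj_iff {v w : Q.Src ⊕ Q.Snk} : Q.graph.Adj v w ↔ ∃ i, Q.move i v = w := by
  constructor
  · rintro (⟨x, i, rfl, rfl⟩ | ⟨x, i, rfl, rfl⟩)
    · exact ⟨i, rfl⟩
    · exact ⟨i, by simp [Q.back_step]⟩
  · rintro ⟨i, rfl⟩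
    cases v with
    | inl x => exact Or.inl ⟨x, i, rfl, rfl⟩
    | inr y => exact Or.inr ⟨Q.back y i, i, rfl, by rw [Q.step_back]⟩

lemma graph_adj_move (i : Fin r) (v : Q.Src ⊕ Q.Snk) : Q.graph.Adj v (Q.move i v) :=
  graph_adj_iff.mpr ⟨i, rfl⟩

noncomputable def label {v w : Q.Src ⊕ Q.Snk} (h : Q.graph.Adj v w) : Fin r :=
  (graph_adj_iff.mp h).choose

lemma move_label {v w : Q.Src ⊕ Q.Snk} (h : Q.graph.Adj v w) : Q.move (Q.label h) v = w :=
  (graph_adj_iff.mp h).choose_spec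

lemma label_eq {v w : Q.Src ⊕ Q.Snk} (h : Q.graph.Adj v w) {i : Fin r} (hi : Q.move i v = w) :
    Q.label h = i :=
  move_left_injective v ((move_label h).trans hi.symm)

noncomputable def transport :
    ∀ {v w : Q.Src ⊕ Q.Snk}, Q.graph.Walk v w → Q.Src ⊕ Q.Snk → Q.Src ⊕ Q.Snk
  | _, _, .nil, s => s
  | _, _, .cons h p, s => transport p (Q.move (Q.label h) s)

lemma transport_concat {u v w : Q.Src ⊕ Q.Snk} (p : Q.graph.Walk u v) (h : Q.graph.Adj v w)
    (s : Q.Src ⊕ Q.Snk) : Q.transport (p.concat h) s = Q.move (Q.label h) (Q.transport p s) := by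
  induction p generalizing s with
  | nil => rfl
  | cons h' p ih => rw [SimpleGraph.Walk.concat_cons]; exact ih h _

end BipData

theorem SimpleGraph.IsAcyclic.support_subset_of_isPath {V : Type*} {G : SimpleGraph V}
    (hG : G.IsAcyclic) {u v : V} {p : G.Walk u v} (hp : p.IsPath) (q : G.Walk u v) :
    p.support ⊆ q.support := by
  classical
  have hpq : p = q.bypass :=
    congrArg Subtype.val
      ((hG.subsingleton_path u v).elim ⟨p, hp⟩ ⟨q.bypass, q.bypass_isPath⟩)
  exact hpq ▸ q.support_bypass_subset_support

namespace CrQuiver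

open SimpleGraph BipData

variable {r : ℕ} (Q : CrQuiver r)

noncomputable def path (v w : Q.Src ⊕ Q.Snk) : Q.graph.Walk v w :=
  (Q.isTree.existsUnique_path v w).choose

variable {Q}

lemma isPath_path (v w : Q.Src ⊕ Q.Snk) : (Q.path v w).IsPath :=
  (Q.isTree.existsUnique_path v w).choose_spec.1

lemma eq_path {v w : Q.Src ⊕ Q.Snk} {p : Q.graph.Walk v w} (hp : p.IsPath) : p = Q.path v w :=
  (Q.isTree.existsUnique_path v w).choose_spec.2 p hp

lemma path_self (v : Q.Src ⊕ Q.Snk) : Q.path v v = .nil :=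
  (eq_path Walk.IsPath.nil).symm

lemma path_eq_concat_or {v w : Q.Src ⊕ Q.Snk} (a : Q.Src ⊕ Q.Snk) (h : Q.graph.Adj v w) :
    Q.path a w = (Q.path a v).concat h ∨ Q.path a v = (Q.path a w).concat h.symm := by
  classical
  by_cases hw : w ∈ (Q.path a v).support
  · right
    have hdrop : (Q.path a v).dropUntil w hw = .cons h.symm .nil :=
      (eq_path ((isPath_path a v).dropUntil hw)).trans
        (eq_path (Walk.IsPath.nil.cons (by simpa using h.ne.symm))).symm
    have htake : (Q.path a v).takeUntil w hw = Q.path a w :=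
      eq_path ((isPath_path a v).takeUntil hw)
    rw [← Walk.take_spec (Q.path a v) hw, hdrop, htake, Walk.concat_eq_append]
  · exact Or.inl (eq_path ((isPath_path a v).concat hw h)).symm

lemma mem_support_path_or {v w : Q.Src ⊕ Q.Snk} (a : Q.Src ⊕ Q.Snk) (h : Q.graph.Adj v w) :
    v ∈ (Q.path a w).support ∨ w ∈ (Q.path a v).support := by
  rcases path_eq_concat_or a h with hpath | hpath
  · exact Or.inl (by simp [hpath, Walk.support_concat])
  · exact Or.inr (by simp [hpath, Walk.support_concat])

lemma induction_on_move {P : Q.Src ⊕ Q.Snk → Prop} (a : Q.Src ⊕ Q.Snk) (ha : P a)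
    (hmove : ∀ i v, P v → P (Q.move i v)) (v : Q.Src ⊕ Q.Snk) : P v := by
  suffices ∀ {u w} (p : Q.graph.Walk u w), P u → P w from this (Q.path a v) ha
  intro u w p
  induction p with
  | nil => exact id
  | cons h _ ih => exact fun hu => ih (move_label h ▸ hmove _ _ hu)

variable (Q)

noncomputable def deckMap (a b v : Q.Src ⊕ Q.Snk) : Q.Src ⊕ Q.Snk :=
  Q.transport (Q.path a v) b

variable {Q}

lemma deckMap_self (a b : Q.Src ⊕ Q.Snk) : Q.deckMap a b a = b := by
  rw [deckMap, path_self]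
  rfl

lemma deckMap_move (a b : Q.Src ⊕ Q.Snk) (i : Fin r) (v : Q.Src ⊕ Q.Snk) :
    Q.deckMap a b (Q.move i v) = Q.move i (Q.deckMap a b v) := by
  have h := graph_adj_move i v
  rcases path_eq_concat_or a h with hpath | hpath
  · rw [deckMap, hpath, transport_concat, label_eq h rfl]
    rfl
  · have hv : Q.deckMap a b v = Q.move i (Q.deckMap a b (Q.move i v)) := by
      rw [deckMap, hpath, transport_concat, label_eq h.symm (move_move i v)]
      rfl
    rw [hv, move_move]

lemma deckMap_deckMap (a b v : Q.Src ⊕ Q.Snk) : Q.deckMap b a (Q.deckMap a b v) = v :=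
  induction_on_move (P := fun v => Q.deckMap b a (Q.deckMap a b v) = v) a
    (by rw [deckMap_self, deckMap_self])
    (fun i v hv => by rw [deckMap_move, deckMap_move, hv]) v

lemma isLeft_deckMap {a b : Q.Src ⊕ Q.Snk} (hab : a.isLeft = b.isLeft) (v : Q.Src ⊕ Q.Snk) :
    (Q.deckMap a b v).isLeft = v.isLeft :=
  induction_on_move (P := fun v => (Q.deckMap a b v).isLeft = v.isLeft) a
    (by rw [deckMap_self, hab])
    (fun i v hv => by rw [deckMap_move, isLeft_move, isLeft_move, hv]) v

end CrQuiver

namespace Equiv.Perm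

variable {α β : Type*} (e : Perm (α ⊕ β))

lemma isLeft_symm_apply_of_isLeft_apply (he : ∀ v, (e v).isLeft = v.isLeft) (v : α ⊕ β) :
    (e.symm v).isLeft = v.isLeft := by
  simpa using (he (e.symm v)).symm

lemma isRight_apply_of_isLeft_apply (he : ∀ v, (e v).isLeft = v.isLeft) (v : α ⊕ β) :
    (e v).isRight = v.isRight := by
  rw [← Sum.bnot_isLeft, he, Sum.bnot_isLeft]

def sumLeft (he : ∀ v, (e v).isLeft = v.isLeft) : Perm α where
  toFun a := (e (.inl a)).getLeft (by rw [he]; rfl)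
  invFun a := (e.symm (.inl a)).getLeft
    (by rw [isLeft_symm_apply_of_isLeft_apply e he]; rfl)
  left_inv a := Sum.inl_injective (β := β) (by simp)
  right_inv a := Sum.inl_injective (β := β) (by simp)

def sumRight (he : ∀ v, (e v).isLeft = v.isLeft) : Perm β where
  toFun b := (e (.inr b)).getRight (by rw [isRight_apply_of_isLeft_apply e he]; rfl)
  invFun b := (e.symm (.inr b)).getRight (by
    rw [isRight_apply_of_isLeft_apply e.symm (isLeft_symm_apply_of_isLeft_apply e he)]; rfl)
  left_inv b := Sum.inr_injective (α := α) (by simp)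
  right_inv b := Sum.inr_injective (α := α) (by simp)

@[simp] lemma inl_sumLeft (he : ∀ v, (e v).isLeft = v.isLeft) (a : α) :
    Sum.inl (e.sumLeft he a) = e (.inl a) :=
  Sum.inl_getLeft _ _

@[simp] lemma inr_sumRight (he : ∀ v, (e v).isLeft = v.isLeft) (b : β) :
    Sum.inr (e.sumRight he b) = e (.inr b) :=
  Sum.inr_getRight _ _

end Equiv.Perm

namespace CrPermAut

open BipData

variable {r : ℕ} {Q : CrQuiver r} {σ : Equiv.Perm (Fin r)}

@[simp] lemma onV_inl (φ : CrPermAut Q σ) (x : Q.Src) : φ.onV (.inl x) = .inl (φ.es x) := rfl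

@[simp] lemma onV_inr (φ : CrPermAut Q σ) (y : Q.Snk) : φ.onV (.inr y) = .inr (φ.et y) := rfl

lemma onV_move (φ : CrPermAut Q σ) (i : Fin r) (v : Q.Src ⊕ Q.Snk) :
    φ.onV (Q.move i v) = Q.move (σ i) (φ.onV v) := by
  cases v with
  | inl x => simp [← φ.comm]
  | inr y =>
    have h := congrArg (Q.back · (σ i)) (φ.comm (Q.back y i) i)
    simp only [Q.back_step, Q.step_back] at h
    simp [h]

def toGraphIso (φ : CrPermAut Q σ) : Q.graph ≃g Q.graph where
  toEquiv := φ.onV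
  map_rel_iff' {v w} := by
    simp only [graph_adj_iff]
    constructor
    · rintro ⟨j, hj⟩
      refine ⟨σ.symm j, φ.onV.injective ?_⟩
      rw [onV_move, Equiv.apply_symm_apply, hj]
    · rintro ⟨i, rfl⟩
      exact ⟨σ i, (φ.onV_move i v).symm⟩

def ofPerm (e : Equiv.Perm (Q.Src ⊕ Q.Snk)) (he : ∀ i v, e (Q.move i v) = Q.move (σ i) (e v))
    (hpar : ∀ v, (e v).isLeft = v.isLeft) : CrPermAut Q σ where
  es := e.sumLeft hpar
  et := e.sumRight hpar
  comm x i := Sum.inr_injective (α := Q.Src) (by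
    change Q.move (σ i) (.inl _) = _
    rw [Equiv.Perm.inl_sumLeft, ← he, move_inl, Equiv.Perm.inr_sumRight])

lemma onV_ofPerm (e : Equiv.Perm (Q.Src ⊕ Q.Snk))
    (he : ∀ i v, e (Q.move i v) = Q.move (σ i) (e v)) (hpar : ∀ v, (e v).isLeft = v.isLeft)
    (v : Q.Src ⊕ Q.Snk) : (ofPerm e he hpar).onV v = e v := by
  cases v <;> simp [ofPerm]

end CrPermAut

namespace CrQuiver

variable {r : ℕ} {Q : CrQuiver r}

theorem exists_crAut_onV_eq {a b : Q.Src ⊕ Q.Snk} (hab : a.isLeft = b.isLeft) :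
    ∃ g : CrAut Q, g.onV a = b := by
  let e : Equiv.Perm (Q.Src ⊕ Q.Snk) :=
    ⟨Q.deckMap a b, Q.deckMap b a, deckMap_deckMap a b, deckMap_deckMap b a⟩
  exact ⟨CrPermAut.ofPerm e (fun i v => deckMap_move a b i v) (isLeft_deckMap hab),
    (CrPermAut.onV_ofPerm _ _ _ a).trans (deckMap_self a b)⟩

end CrQuiver

namespace CrRep

open SimpleGraph BipData CrQuiver

variable {k : Type} [Field k] {r : ℕ} {Q : CrQuiver r}

section Twist

variable {σ : Equiv.Perm (Fin r)} (M : CrRep k Q) (φ : CrPermAut Q σ)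

lemma suppSet_twist : (M.twist φ).suppSet = φ.onV ⁻¹' M.suppSet := by
  ext (x | y) <;> rfl

variable {M φ}

lemma inTree_twist_iff {z : Q.Src ⊕ Q.Snk} : (M.twist φ).inTree z ↔ M.inTree (φ.onV z) := by
  let e := φ.toGraphIso
  rw [inTree, inTree, suppSet_twist]
  constructor
  · rintro ⟨a, ha, b, hb, p, hp, hz⟩
    refine ⟨e a, ha, e b, hb, p.map e.toHom, hp.map e.injective, ?_⟩
    rw [Walk.support_map]
    exact List.mem_map_of_mem hz
  · rintro ⟨a, ha, b, hb, p, hp, hz⟩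
    have he : ∀ v, φ.onV (e.symm v) = v := e.apply_symm_apply
    refine ⟨e.symm a, by rwa [Set.mem_preimage, he], e.symm b, by rwa [Set.mem_preimage, he],
      p.map e.symm.toHom, hp.map e.symm.injective, ?_⟩
    rw [Walk.support_map, ← e.symm_apply_apply z]
    exact List.mem_map_of_mem hz

lemma isLeaf_twist_iff {z : Q.Src ⊕ Q.Snk} : (M.twist φ).IsLeaf z ↔ M.IsLeaf (φ.onV z) := by
  have hnbr : {w | Q.graph.Adj z w ∧ (M.twist φ).inTree w} =
      φ.onV ⁻¹' {w | Q.graph.Adj (φ.onV z) w ∧ M.inTree w} := by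
    ext w
    simp only [Set.mem_ofPred_eq, Set.mem_preimage, inTree_twist_iff]
    rw [← φ.toGraphIso.map_adj_iff]
    rfl
  rw [IsLeaf, IsLeaf, inTree_twist_iff, hnbr]
  exact and_congr_right fun _ =>
    ⟨Set.subsingleton_of_preimage φ.onV.surjective _, (·.preimage φ.onV.injective)⟩

end Twist

lemma inTree_of_mem_support {M : CrRep k Q} {v z : Q.Src ⊕ Q.Snk} (hv : v ∈ M.suppSet)
    (hz : M.inTree z) {P : Q.graph.Walk v z} (hP : P.IsPath) {u : Q.Src ⊕ Q.Snk}
    (hu : u ∈ P.support) : M.inTree u := by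
  classical
  obtain ⟨a, ha, b, hb, p, hp, hzp⟩ := hz
  -- in a tree, the path from `v` to `z` runs inside the walk `v ⇝ a ⇝ z`
  have hsub := Q.isTree.isAcyclic.support_subset_of_isPath hP
    ((Q.path v a).append (p.takeUntil z hzp))
  rcases (Walk.mem_support_append_iff _ _).mp (hsub hu) with hu | hu
  · exact ⟨v, hv, a, ha, _, isPath_path v a, hu⟩
  · exact ⟨a, ha, b, hb, p, hp, p.support_takeUntil_subset_support hzp hu⟩

lemma IsLeaf.subsingleton_setOf_inTree_move {M : CrRep k Q} {z : Q.Src ⊕ Q.Snk}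
    (hz : M.IsLeaf z) : {i | M.inTree (Q.move i z)}.Subsingleton :=
  fun i hi j hj =>
    move_left_injective z (hz.2 ⟨graph_adj_move i z, hi⟩ ⟨graph_adj_move j z, hj⟩)

lemma suppSet_inter_eq_empty_of_adj {M N : CrRep k Q} {v w : Q.Src ⊕ Q.Snk}
    (h : Q.graph.Adj v w) (hMv : M.inTree v) (hMw : ¬ M.inTree w) (hNw : N.inTree w)
    (hNv : ¬ N.inTree v) : M.suppSet ∩ N.suppSet = ∅ := by
  refine Set.eq_empty_of_forall_notMem fun u ⟨huM, huN⟩ => ?_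
  rcases mem_support_path_or u h with hv | hw
  · exact hNv (inTree_of_mem_support huN hNw (isPath_path u w) hv)
  · exact hMw (inTree_of_mem_support huM hMv (isPath_path u v) hw)

end CrRep

lemma Set.exists_notMem_union_of_subsingleton {α : Type*} [Finite α] (hα : 2 < Nat.card α)
    {s t : Set α} (hs : s.Subsingleton) (ht : t.Subsingleton) : ∃ a, a ∉ s ∪ t := by
  by_contra! hst
  have hcard : Nat.card α ≤ 1 + 1 := calc
    Nat.card α = (s ∪ t).ncard := by rw [Set.eq_univ_of_forall hst, Set.ncard_univ]
    _ ≤ s.ncard + t.ncard := Set.ncard_union_le s t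
    _ ≤ 1 + 1 := add_le_add (Set.ncard_le_one_iff_subsingleton.mpr hs)
        (Set.ncard_le_one_iff_subsingleton.mpr ht)
  omega

theorem statement8_general {k : Type} [Field k] {r : ℕ} (hr : 3 ≤ r)
    (Q : CrQuiver r)
    (M N : CrRep k Q)
    (x : Q.Src) (y : Q.Snk) (hx : M.IsLeaf (Sum.inl x)) (hy : N.IsLeaf (Sum.inr y)) :
    ∃ g : CrAut Q, ∃ i0 : Fin r,
      g.et (Q.step x i0) = y ∧ LeafConnected (N.shift g) M x i0 := by
  obtain ⟨i0, hi0⟩ := Set.exists_notMem_union_of_subsingleton (by rw [Nat.card_fin]; omega)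
    hx.subsingleton_setOf_inTree_move hy.subsingleton_setOf_inTree_move
  obtain ⟨hMx', hNy'⟩ := not_or.mp hi0
  obtain ⟨g, hgx⟩ := CrQuiver.exists_crAut_onV_eq (a := .inl x) (b := Q.move i0 (.inr y)) rfl
  have hgx' : g.onV (Q.move i0 (.inl x)) = .inr y := by
    rw [g.onV_move, hgx, Equiv.Perm.one_apply, BipData.move_move]
  have hy' : (N.shift g).IsLeaf (Q.move i0 (.inl x)) := CrRep.isLeaf_twist_iff.mpr (hgx' ▸ hy)
  refine ⟨g, i0, Sum.inr_injective hgx', hx, hy', ?_⟩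
  exact CrRep.suppSet_inter_eq_empty_of_adj (BipData.graph_adj_move i0 _) hx.1 hMx' hy'.1
    (by rw [CrRep.shift, CrRep.inTree_twist_iff, hgx]; exact hNy')

theorem statement8 {k : Type} [Field k] [IsAlgClosed k] {r : ℕ} (hr : 3 ≤ r)
    (Q : CrQuiver r)
    (M N : CrRep k Q) (hM : M.Indec) (hN : N.Indec)
    (x : Q.Src) (y : Q.Snk) (hx : M.IsLeaf (Sum.inl x)) (hy : N.IsLeaf (Sum.inr y)) :
    ∃ g : CrAut Q, ∃ i0 : Fin r,
      g.et (Q.step x i0) = y ∧ LeafConnected (N.shift g) M x i0 :=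
  statement8_general hr Q M N x y hx hy
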